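/- arXiv:1912.12332 — 2 statements merged into one kernel-verified Lean document; each statement's English description precedes it below -/
import Mathlib

section
/- Let 𝓑 be a Banach space, and let (𝓛_ω)_{ω∈Ω} be a measurable family of bounded linear operators on 𝓑 over an ergodic invertible measure-preserving system (Ω, F, P, σ), with a continuous linear functional ξ on 𝓑 such that ξ(𝓛_ω h) = ξ(h) for all h and ω. Suppose there exist D, λ > 0 such that ‖𝓛_{σ^{n-1}ω}∘⋯∘𝓛_ω h‖ ≤ D e^{-λn}‖h‖ for all h with ξ(h) = 0, P-a.e. ω, all n. Let 𝓩 be a nonempty closed subset of the space of essentially bounded measurable maps v: Ω → 𝓑 with ξ(v(ω)) = 1 a.e., invariant under the operator (𝕃v)(ω) = 𝓛_{σ^{-1}ω} v(σ^{-1}ω). Then 𝕃 has a unique fixed point in 𝓩. -/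
open MeasureTheory

private lemma foldl_sub_aux {𝓑 : Type*} [NormedAddCommGroup 𝓑] [NormedSpace ℝ 𝓑]
    (A : ℕ → 𝓑 →L[ℝ] 𝓑) (l : List ℕ) (a b : 𝓑) :
    l.foldl (fun x k => A k x) a - l.foldl (fun x k => A k x) b =
      l.foldl (fun x k => A k x) (a - b) := by
  induction l generalizing a b with
  | nil => rfl
  | cons k t ih => simpa using (ih (A k a) (A k b)).trans (by rw [← map_sub])

/-- Existence and uniqueness of a fixed point of the operator
`(𝕃 v)(ω) = 𝓛_{σ⁻¹ω} v(σ⁻¹ω)` on a nonempty closed `𝕃`-invariant subset `𝓩` of the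
space of essentially bounded measurable maps `v : Ω → 𝓑` with `ξ(v(ω)) = 1` a.e.,
given the exponential decay of the cocycle on `ker ξ`. -/
theorem stmt5 {Ω : Type*} [MeasurableSpace Ω] (P : Measure Ω) [IsProbabilityMeasure P]
    {𝓑 : Type*} [NormedAddCommGroup 𝓑] [NormedSpace ℝ 𝓑] [CompleteSpace 𝓑]
    (σ : Ω ≃ Ω) (hσ : MeasurePreserving σ P P) (hσ' : Measurable σ.symm)
    (hErg : Ergodic σ P)
    (L : Ω → 𝓑 →L[ℝ] 𝓑) (hLmeas : ∀ h : 𝓑, StronglyMeasurable fun ω => L ω h)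
    (ξ : 𝓑 →L[ℝ] ℝ) (hξ : ∀ ω h, ξ (L ω h) = ξ h)
    (D lam : ℝ) (hD : 0 < D) (hlam : 0 < lam)
    (hdec : ∀ᵐ ω ∂P, ∀ n : ℕ, ∀ h : 𝓑, ξ h = 0 →
      ‖(List.range n).foldl (fun x k => L ((⇑σ)^[k] ω) x) h‖ ≤
        D * Real.exp (-lam * n) * ‖h‖)
    (𝕃 : Lp 𝓑 ⊤ P → Lp 𝓑 ⊤ P)
    (h𝕃 : ∀ v : Lp 𝓑 ⊤ P, ∀ᵐ ω ∂P,
      (𝕃 v : Ω → 𝓑) ω = L (σ.symm ω) ((v : Ω → 𝓑) (σ.symm ω)))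
    (𝓩 : Set (Lp 𝓑 ⊤ P)) (h𝓩c : IsClosed 𝓩) (h𝓩ne : 𝓩.Nonempty)
    (h𝓩norm : ∀ v ∈ 𝓩, ∀ᵐ ω ∂P, ξ ((v : Ω → 𝓑) ω) = 1)
    (h𝓩inv : Set.MapsTo 𝕃 𝓩 𝓩) :
    ∃! v : Lp 𝓑 ⊤ P, v ∈ 𝓩 ∧ 𝕃 v = v := by
  classical
  -- σ.symm is measure preserving
  set e : Ω ≃ᵐ Ω := { toEquiv := σ, measurable_toFun := hσ.measurable,
                      measurable_invFun := hσ' } with he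
  have hS : MeasurePreserving σ.symm P P := MeasurePreserving.symm e hσ
  have haeS : ∀ (n : ℕ) {p : Ω → Prop}, (∀ᵐ ω ∂P, p ω) →
      ∀ᵐ ω ∂P, p ((⇑σ.symm)^[n] ω) := fun n _ h =>
    ((hS.iterate n).quasiMeasurePreserving).ae h
  have hcancel : ∀ (m : ℕ) (x : Ω), (⇑σ)^[m] ((⇑σ.symm)^[m] x) = x := by
    intro m
    exact Function.LeftInverse.iterate (fun x => σ.apply_symm_apply x) m
  -- iterate formula
  have hiter : ∀ (v : Lp 𝓑 ⊤ P) (n : ℕ), ∀ᵐ ω ∂P,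
      (𝕃^[n] v : Ω → 𝓑) ω =
        (List.range n).foldl (fun x k => L ((⇑σ)^[k] ((⇑σ.symm)^[n] ω)) x)
          ((v : Ω → 𝓑) ((⇑σ.symm)^[n] ω)) := by
    intro v n
    induction n with
    | zero => simp
    | succ n ih =>
      filter_upwards [h𝕃 (𝕃^[n] v), haeS 1 ih] with ω h1 h2
      have hω1 : (⇑σ.symm)^[1] ω = σ.symm ω := by simp
      rw [hω1] at h2
      have hω2 : (⇑σ.symm)^[n] (σ.symm ω) = (⇑σ.symm)^[n+1] ω :=
        (Function.iterate_succ_apply _ n ω).symm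
      rw [hω2] at h2
      have hσn : (⇑σ)^[n] ((⇑σ.symm)^[n+1] ω) = σ.symm ω := by
        rw [Function.iterate_succ_apply, hcancel n]
      calc (𝕃^[n+1] v : Ω → 𝓑) ω
          = (𝕃 (𝕃^[n] v) : Ω → 𝓑) ω := by rw [Function.iterate_succ_apply']
        _ = L (σ.symm ω) ((𝕃^[n] v : Ω → 𝓑) (σ.symm ω)) := h1
        _ = L (σ.symm ω) ((List.range n).foldl
              (fun x k => L ((⇑σ)^[k] ((⇑σ.symm)^[n+1] ω)) x)
              ((v : Ω → 𝓑) ((⇑σ.symm)^[n+1] ω))) := by rw [h2]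
        _ = _ := by
            rw [List.range_succ, List.foldl_append, List.foldl_cons, List.foldl_nil, hσn]
  -- norm bound from a.e. bound (p = ∞)
  have hnormle : ∀ (f : Lp 𝓑 ⊤ P) (C : ℝ), 0 ≤ C →
      (∀ᵐ ω ∂P, ‖(f : Ω → 𝓑) ω‖ ≤ C) → ‖f‖ ≤ C := by
    intro f C hC hf
    rw [Lp.norm_def]
    have h1 : eLpNorm f ⊤ P ≤ ENNReal.ofReal C := by
      rw [eLpNorm_exponent_top]
      exact eLpNormEssSup_le_of_ae_bound hf
    calc (eLpNorm f ⊤ P).toReal ≤ (ENNReal.ofReal C).toReal :=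
          ENNReal.toReal_mono ENNReal.ofReal_ne_top h1
      _ = C := ENNReal.toReal_ofReal hC
  -- a.e. pointwise bound by the norm
  have haeb : ∀ u v : Lp 𝓑 ⊤ P, ∀ᵐ ω ∂P,
      ‖(u : Ω → 𝓑) ω - (v : Ω → 𝓑) ω‖ ≤ dist u v := by
    intro u v
    have h0 : eLpNormEssSup (⇑u - ⇑v) P = eLpNorm (⇑(u - v)) ⊤ P := by
      rw [eLpNorm_congr_ae (Lp.coeFn_sub u v), eLpNorm_exponent_top]
    filter_upwards [ae_le_eLpNormEssSup (f := ⇑u - ⇑v) (μ := P)] with ω hω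
    have hfin : eLpNormEssSup (⇑u - ⇑v) P ≠ ⊤ := by
      rw [h0]; exact (Lp.eLpNorm_lt_top (u - v)).ne
    have h2 := ENNReal.toReal_mono hfin hω
    have hdist : dist u v = (eLpNormEssSup (⇑u - ⇑v) P).toReal := by
      rw [Lp.dist_def, eLpNorm_exponent_top]
    rw [hdist]
    simpa using h2
  -- key contraction estimate
  have key : ∀ u ∈ 𝓩, ∀ v ∈ 𝓩, ∀ n : ℕ,
      dist (𝕃^[n] u) (𝕃^[n] v) ≤ D * Real.exp (-lam * n) * dist u v := by
    intro u hu v hv n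
    have hzero : ∀ᵐ ω ∂P, ξ ((u : Ω → 𝓑) ω - (v : Ω → 𝓑) ω) = 0 := by
      filter_upwards [h𝓩norm u hu, h𝓩norm v hv] with ω h1 h2
      rw [map_sub, h1, h2, sub_self]
    rw [dist_eq_norm]
    refine hnormle _ _ (by positivity) ?_
    filter_upwards [Lp.coeFn_sub (𝕃^[n] u) (𝕃^[n] v), hiter u n, hiter v n,
      haeS n hzero, haeS n hdec, haeS n (haeb u v)] with ω hsub hiu hiv hz hd hb
    set ω' := (⇑σ.symm)^[n] ω
    rw [hsub, Pi.sub_apply, hiu, hiv,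
      foldl_sub_aux (fun k => L ((⇑σ)^[k] ω')) (List.range n)]
    calc ‖(List.range n).foldl (fun x k => L ((⇑σ)^[k] ω') x)
            ((u : Ω → 𝓑) ω' - (v : Ω → 𝓑) ω')‖
        ≤ D * Real.exp (-lam * n) * ‖(u : Ω → 𝓑) ω' - (v : Ω → 𝓑) ω'‖ := hd n _ hz
      _ ≤ D * Real.exp (-lam * n) * dist u v := by
          have : (0:ℝ) < D * Real.exp (-lam * n) := by positivity
          exact mul_le_mul_of_nonneg_left hb this.le
  -- choose N with contraction constant < 1
  obtain ⟨N, hN⟩ := exists_nat_gt (Real.log D / lam)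
  have hKlt : D * Real.exp (-lam * N) < 1 := by
    have h1 : Real.log D < lam * N := by
      rwa [div_lt_iff₀ hlam, mul_comm] at hN
    have h2 : Real.exp (-lam * N) < Real.exp (-Real.log D) := by
      apply Real.exp_lt_exp.2; linarith
    have h3 : Real.exp (-Real.log D) = 1 / D := by
      rw [Real.exp_neg, Real.exp_log hD, one_div]
    calc D * Real.exp (-lam * N) < D * (1 / D) :=
          mul_lt_mul_of_pos_left (h2.trans_eq h3) hD
      _ = 1 := by field_simp
  set K : NNReal := (D * Real.exp (-lam * N)).toNNReal with hKdef
  have hKcoe : (K : ℝ) = D * Real.exp (-lam * N) :=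
    Real.coe_toNNReal _ (by positivity)
  -- the restricted map on 𝓩
  haveI : Nonempty 𝓩 := h𝓩ne.to_subtype
  haveI : CompleteSpace 𝓩 := h𝓩c.completeSpace_coe
  set f : 𝓩 → 𝓩 := h𝓩inv.restrict 𝕃 𝓩 𝓩 with hf
  have hfc : ∀ (k : ℕ) (x : 𝓩), ((f^[k] x : 𝓩) : Lp 𝓑 ⊤ P) = 𝕃^[k] (x : Lp 𝓑 ⊤ P) :=
    fun k x => h𝓩inv.coe_iterate_restrict x k
  have hcontr : ContractingWith K f^[N] := by
    constructor
    · rw [← NNReal.coe_lt_one, hKcoe]; exact hKlt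
    · refine LipschitzWith.of_dist_le_mul fun x y => ?_
      rw [Subtype.dist_eq, Subtype.dist_eq, hfc, hfc, hKcoe]
      exact key x x.2 y y.2 N
  have hfix : Function.IsFixedPt f (hcontr.fixedPoint f^[N]) :=
    hcontr.isFixedPt_fixedPoint_iterate
  set z : 𝓩 := hcontr.fixedPoint f^[N] with hz
  refine ⟨(z : Lp 𝓑 ⊤ P), ⟨z.2, ?_⟩, ?_⟩
  · have := congrArg (Subtype.val) hfix
    simpa [hf] using this
  · rintro y ⟨hy𝓩, hyfix⟩
    have hyf : Function.IsFixedPt f ⟨y, hy𝓩⟩ := by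
      apply Subtype.ext
      simpa [hf] using hyfix
    have : (⟨y, hy𝓩⟩ : 𝓩) = z := hcontr.fixedPoint_unique (hyf.iterate N)
    exact congrArg Subtype.val this
end

section
/- Let μ be a τ-invariant probability measure for a measurable map τ on a space X, and let g ∈ L²(X, μ) with ∫ g dμ = 0 and Σ_{n≥1} (n+1)|∫ g·(g∘τ^n) dμ| < ∞. Then the limit Σ² := lim_{n→∞} (1/n) Var_μ(Σ_{j=0}^{n-1} g∘τ^j) exists and equals ∫ g² dμ + 2 Σ_{n=1}^∞ ∫ g·(g∘τ^n) dμ. -/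
open MeasureTheory Filter Finset

/-! By invariance of `μ`, `∫ (g∘τ^j)(g∘τ^l) dμ = c (|j - l|)` with `c k = ∫ g (g∘τ^k) dμ`,
so the second moment of `Σ_{j<n} g∘τ^j` is the Toeplitz sum `Σ_{j,l<n} c |j - l|`, which
regroups as `Σ_{m<n} (c 0 + 2 Σ_{k<m} c (k+1))`. Dividing by `n` gives the Cesàro means of the
partial sums of the convergent series `c 0 + 2 Σ_{k≥1} c k`. -/

theorem MeasureTheory.MeasurePreserving.integral_comp_of_aestronglyMeasurable {α β G : Type*}
    [MeasurableSpace α] [MeasurableSpace β] [NormedAddCommGroup G] [NormedSpace ℝ G]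
    {μ : Measure α} {ν : Measure β} {f : α → β} (hf : MeasurePreserving f μ ν) {F : β → G}
    (hF : AEStronglyMeasurable F ν) : ∫ x, F (f x) ∂μ = ∫ y, F y ∂ν := by
  rw [← hf.map_eq] at hF ⊢
  exact (integral_map hf.aemeasurable hF).symm

theorem sum_range_sum_range_dist {R : Type*} [CommSemiring R] (c : ℕ → R) (n : ℕ) :
    ∑ j ∈ range n, ∑ l ∈ range n, c (Nat.dist j l) =
      ∑ m ∈ range n, (c 0 + 2 * ∑ k ∈ range m, c (k + 1)) := by
  induction n with
  | zero => simp
  | succ n ih =>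
    have hcol : ∑ j ∈ range n, c (Nat.dist j n) = ∑ k ∈ range n, c (k + 1) := by
      rw [← sum_range_reflect]
      refine sum_congr rfl fun j hj => ?_
      have hjn := mem_range.1 hj
      rw [Nat.dist_eq_sub_of_le (by omega)]
      congr 1
      omega
    have hrow : ∑ l ∈ range n, c (Nat.dist n l) = ∑ k ∈ range n, c (k + 1) := by
      simpa only [Nat.dist_comm] using hcol
    simp only [sum_range_succ, sum_add_distrib, ih, hcol, hrow, Nat.dist_self]
    ring

theorem tendsto_inv_mul_sum_sum_dist {c : ℕ → ℝ} (hc : Summable fun k => c (k + 1)) :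
    Tendsto (fun n : ℕ => (n : ℝ)⁻¹ * ∑ j ∈ range n, ∑ l ∈ range n, c (Nat.dist j l)) atTop
      (nhds (c 0 + 2 * ∑' k, c (k + 1))) := by
  simp only [sum_range_sum_range_dist]
  exact (tendsto_const_nhds.add (hc.hasSum.tendsto_sum_nat.const_mul 2)).cesaro

section Stationary

variable {X : Type*} [MeasurableSpace X] {μ : Measure X} {τ : X → X} {g : X → ℝ}

theorem integral_mul_iterate_eq_dist (hτ : MeasurePreserving τ μ μ) (hg : MemLp g 2 μ)
    (j l : ℕ) :
    ∫ x, g (τ^[j] x) * g (τ^[l] x) ∂μ = ∫ x, g x * g (τ^[Nat.dist j l] x) ∂μ := by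
  have shift : ∀ j k, ∫ x, g (τ^[j] x) * g (τ^[k + j] x) ∂μ = ∫ x, g x * g (τ^[k] x) ∂μ :=
    fun j k => by
      simp only [Function.iterate_add_apply]
      exact (hτ.iterate j).integral_comp_of_aestronglyMeasurable
        (hg.integrable_mul (hg.comp_measurePreserving (hτ.iterate k))).aestronglyMeasurable
  rcases le_total j l with hjl | hlj
  · rw [Nat.dist_eq_sub_of_le hjl, ← shift j, Nat.sub_add_cancel hjl]
  · rw [Nat.dist_eq_sub_of_le_right hlj, ← shift l, Nat.sub_add_cancel hlj]
    simp only [mul_comm]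

theorem integral_sq_sum_iterate (hτ : MeasurePreserving τ μ μ) (hg : MemLp g 2 μ) (n : ℕ) :
    ∫ x, (∑ j ∈ range n, g (τ^[j] x)) ^ 2 ∂μ =
      ∑ j ∈ range n, ∑ l ∈ range n, ∫ x, g x * g (τ^[Nat.dist j l] x) ∂μ := by
  have hint : ∀ j l, Integrable (fun x => g (τ^[j] x) * g (τ^[l] x)) μ := fun j l =>
    (hg.comp_measurePreserving (hτ.iterate j)).integrable_mul
      (hg.comp_measurePreserving (hτ.iterate l))
  simp only [sq, sum_mul_sum]
  rw [integral_finsetSum _ fun j _ => integrable_finsetSum _ fun l _ => hint j l]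
  refine sum_congr rfl fun j _ => ?_
  rw [integral_finsetSum _ fun l _ => hint j l]
  exact sum_congr rfl fun l _ => integral_mul_iterate_eq_dist hτ hg j l

end Stationary

theorem stmt19_general {X : Type*} [MeasurableSpace X] (μ : Measure X)
    (τ : X → X) (hτ : MeasurePreserving τ μ μ)
    (g : X → ℝ) (hg : MemLp g 2 μ)
    (hsum : Summable fun n : ℕ => ((n : ℝ) + 2) * |∫ x, g x * g (τ^[n + 1] x) ∂μ|) :
    Tendsto
      (fun n : ℕ => (1 / (n : ℝ)) * ∫ x, (∑ j ∈ Finset.range n, g (τ^[j] x)) ^ 2 ∂μ)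
      atTop
      (nhds ((∫ x, g x ^ 2 ∂μ) + 2 * ∑' n : ℕ, ∫ x, g x * g (τ^[n + 1] x) ∂μ)) := by
  have hcov : Summable fun n : ℕ => ∫ x, g x * g (τ^[n + 1] x) ∂μ :=
    (hsum.of_nonneg_of_le (fun _ => abs_nonneg _) fun n =>
      le_mul_of_one_le_left (abs_nonneg _) (by linarith [n.cast_nonneg (α := ℝ)])).of_abs
  have hlim := tendsto_inv_mul_sum_sum_dist (c := fun k => ∫ x, g x * g (τ^[k] x) ∂μ) hcov
  simp only [Function.iterate_zero, id, ← integral_sq_sum_iterate hτ hg] at hlim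
  simpa only [one_div, sq] using hlim

/-- If `μ` is `τ`-invariant, `g ∈ L²(μ)` is centered and
`Σ_{n≥1} (n+1)|∫ g (g∘τ^n) dμ| < ∞`, then
`Σ² = lim (1/n) Var_μ(Σ_{j<n} g∘τ^j)` exists and equals
`∫ g² dμ + 2 Σ_{n≥1} ∫ g (g∘τ^n) dμ`. -/
theorem stmt19 {X : Type*} [MeasurableSpace X] (μ : Measure X) [IsProbabilityMeasure μ]
    (τ : X → X) (hτ : MeasurePreserving τ μ μ)
    (g : X → ℝ) (hg : MemLp g 2 μ) (hcent : ∫ x, g x ∂μ = 0)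
    (hsum : Summable fun n : ℕ => ((n : ℝ) + 2) * |∫ x, g x * g (τ^[n + 1] x) ∂μ|) :
    Tendsto
      (fun n : ℕ => (1 / (n : ℝ)) * ∫ x, (∑ j ∈ Finset.range n, g (τ^[j] x)) ^ 2 ∂μ)
      atTop
      (nhds ((∫ x, g x ^ 2 ∂μ) + 2 * ∑' n : ℕ, ∫ x, g x * g (τ^[n + 1] x) ∂μ)) :=
  stmt19_general μ τ hτ g hg hsum
end
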